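/- The function u(y) solving ∫_{u(y)}^{∞} ds / √(e^{2s} − 2s − 1) = y satisfies u(y) + log y → 0 as y → 0⁺. -/

import Mathlib

/-!
Since `e^{2s} - 2s - 1 < e^{2s}`, the integrand dominates `e^{-s}`, so `y ≥ e^{-u(y)}`; in
particular `u(y) → ∞` as `y → 0⁺`. Conversely `(2s + 1) e^{-2s} → 0`, so for large `s` the
integrand is at most `e^{ε} e^{-s}`, giving `y ≤ e^{ε} e^{-u(y)}` once `u(y)` is large.
Together, `0 ≤ u(y) + log y ≤ ε` for small `y`.
-/

open Real MeasureTheory Set Filter Topology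

lemma exp_neg_le_setIntegral_Ioi {f : ℝ → ℝ} {a : ℝ} (hf : IntegrableOn f (Ioi a))
    (h : ∀ s ∈ Ioi a, exp (-s) ≤ f s) : exp (-a) ≤ ∫ s in Ioi a, f s := by
  rw [← integral_exp_neg_Ioi a]
  exact setIntegral_mono_on (integrableOn_exp_neg_Ioi a) hf measurableSet_Ioi h

lemma setIntegral_Ioi_le_mul_exp_neg {f : ℝ → ℝ} {a C : ℝ} (hf : IntegrableOn f (Ioi a))
    (h : ∀ s ∈ Ioi a, f s ≤ C * exp (-s)) : ∫ s in Ioi a, f s ≤ C * exp (-a) := by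
  rw [← integral_exp_neg_Ioi a, ← integral_const_mul]
  exact setIntegral_mono_on hf ((integrableOn_exp_neg_Ioi a).const_mul C) measurableSet_Ioi h

lemma exp_neg_le_one_div_sqrt {s : ℝ} (hs : 0 < s) :
    exp (-s) ≤ 1 / √(exp (2 * s) - 2 * s - 1) := by
  have hpos : 0 < exp (2 * s) - 2 * s - 1 := by
    linarith [add_one_lt_exp (x := 2 * s) (by positivity)]
  have hle : √(exp (2 * s) - 2 * s - 1) ≤ exp s := by
    rw [← sqrt_mul_self (exp_pos s).le, ← exp_add, ← two_mul]
    exact sqrt_le_sqrt (by linarith)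
  rw [exp_neg, ← one_div]
  exact one_div_le_one_div_of_le (sqrt_pos.2 hpos) hle

lemma eventually_one_div_sqrt_le {ε : ℝ} (hε : 0 < ε) :
    ∀ᶠ s in atTop, 1 / √(exp (2 * s) - 2 * s - 1) ≤ exp ε * exp (-s) := by
  have hlim : Tendsto (fun s : ℝ => (2 * s + 1) * exp (-(2 * s))) atTop (𝓝 0) := by
    have h := (tendsto_pow_mul_exp_neg_atTop_nhds_zero 1).add
      (tendsto_exp_neg_atTop_nhds_zero)
    simp only [pow_one, zero_add] at h
    refine (h.comp (tendsto_id.const_mul_atTop two_pos)).congr fun s => ?_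
    simp only [Function.comp_apply, id]
    ring
  have hc : 0 < 1 - exp (-(2 * ε)) := by
    linarith [exp_lt_one_iff.2 (by linarith : -(2 * ε) < 0)]
  filter_upwards [hlim.eventually (gt_mem_nhds hc)] with s hs
  have hkey : exp (s - ε) * exp (s - ε) ≤ exp (2 * s) - 2 * s - 1 := by
    have h2s : (2 * s + 1) * exp (-(2 * s)) * exp (2 * s) = 2 * s + 1 := by
      rw [mul_assoc, ← exp_add, neg_add_cancel, exp_zero, mul_one]
    have hsplit : exp (s - ε) * exp (s - ε) = exp (-(2 * ε)) * exp (2 * s) := by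
      rw [← exp_add, ← exp_add]; ring_nf
    nlinarith [exp_pos (2 * s)]
  have hsqrt : exp (s - ε) ≤ √(exp (2 * s) - 2 * s - 1) := by
    rw [← sqrt_mul_self (exp_pos _).le]
    exact sqrt_le_sqrt hkey
  calc 1 / √(exp (2 * s) - 2 * s - 1) ≤ 1 / exp (s - ε) :=
        one_div_le_one_div_of_le (exp_pos _) hsqrt
    _ = exp ε * exp (-s) := by rw [one_div, ← exp_neg, ← exp_add]; ring_nf

/-- if `u` satisfies `∫_{u(y)}^{∞} ds/√(e^{2s} − 2s − 1) = y` for all `y > 0`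
(with `u > 0`), then `u(y) + log y → 0` as `y → 0⁺`. -/
theorem stmt_4 (u : ℝ → ℝ)
    (hpos : ∀ y, 0 < y → 0 < u y)
    (hint : ∀ y, 0 < y →
      (∫ s in Set.Ioi (u y), 1 / Real.sqrt (Real.exp (2 * s) - 2 * s - 1)) = y) :
    Filter.Tendsto (fun y => u y + Real.log y) (nhdsWithin 0 (Set.Ioi 0)) (nhds 0) := by
  have hf : ∀ y, 0 < y →
      IntegrableOn (fun s => 1 / √(exp (2 * s) - 2 * s - 1)) (Ioi (u y)) := fun y hy =>
    Integrable.of_integral_ne_zero (by rw [hint y hy]; exact hy.ne')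
  have hlow : ∀ y, 0 < y → -u y ≤ log y := fun y hy =>
    (le_log_iff_exp_le hy).2 <| (exp_neg_le_setIntegral_Ioi (hf y hy)
      fun s hs => exp_neg_le_one_div_sqrt ((hpos y hy).trans hs)).trans_eq (hint y hy)
  have hu : Tendsto u (𝓝[>] 0) atTop :=
    tendsto_atTop_mono' _ (eventually_nhdsWithin_of_forall fun y hy => neg_le.1 (hlow y hy))
      (tendsto_neg_atBot_atTop.comp tendsto_log_nhdsGT_zero)
  refine tendsto_order.2 ⟨fun a ha => ?_, fun b hb => ?_⟩
  · filter_upwards [self_mem_nhdsWithin] with y hy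
    linarith [hlow y hy]
  · obtain ⟨S, hS⟩ := (eventually_one_div_sqrt_le (half_pos hb)).exists_forall_of_atTop
    filter_upwards [self_mem_nhdsWithin, hu.eventually_ge_atTop S] with y hy hyS
    have hup : y ≤ exp (b / 2) * exp (-u y) := (hint y hy).symm.trans_le <|
      setIntegral_Ioi_le_mul_exp_neg (hf y hy) fun s hs => hS s (hyS.trans hs.le)
    rw [← exp_add, ← log_le_iff_le_exp hy] at hup
    linarith
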